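/- arXiv:2409.15785 — 6 statements merged into one kernel-verified Lean document; each statement's English description precedes it below -/
import Mathlib

section
/- Let A be a p-adically separated ring with an endomorphism φ such that φ(a) ≡ a^p mod pA for all a. If A is p-torsion-free and A/pA is reduced, then φ is injective. -/
/-- Let `A` be a `p`-adically separated commutative ring with a ring
endomorphism `φ` such that `φ a ≡ a ^ p mod pA` for all `a` (a Frobenius lift).
If `A` is `p`-torsion-free and `A/pA` is reduced, then `φ` is injective. -/
theorem frobenius_lift_injective_of_reduced
    (A : Type*) [CommRing A] (p : ℕ) (hp : p.Prime) (φ : A →+* A)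
    (hlift : ∀ a : A, φ a - a ^ p ∈ Ideal.span {(p : A)})
    (hsep : ∀ a : A, (∀ n : ℕ, a ∈ Ideal.span {(p : A) ^ n}) → a = 0)
    (htf : ∀ a : A, (p : A) * a = 0 → a = 0)
    (hred : IsReduced (A ⧸ Ideal.span {(p : A)})) :
    Function.Injective φ := by
  -- key step: if φ a = 0 then a ∈ pA
  have key : ∀ a : A, φ a = 0 → a ∈ Ideal.span {(p : A)} := by
    intro a ha
    have hap : a ^ p ∈ Ideal.span {(p : A)} := by
      have := hlift a
      rw [ha, zero_sub] at this
      simpa using (Ideal.span {(p : A)}).neg_mem this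
    have hq : Ideal.Quotient.mk (Ideal.span {(p : A)}) a = 0 := by
      have hnil : IsNilpotent (Ideal.Quotient.mk (Ideal.span {(p : A)}) a) := by
        refine ⟨p, ?_⟩
        rw [← map_pow, Ideal.Quotient.eq_zero_iff_mem]
        exact hap
      exact hnil.eq_zero
    rwa [Ideal.Quotient.eq_zero_iff_mem] at hq
  have main : ∀ n : ℕ, ∀ a : A, φ a = 0 → a ∈ Ideal.span {(p : A) ^ n} := by
    intro n
    induction n with
    | zero => intro a _; simp [Ideal.span_singleton_one]
    | succ n ih =>
      intro a ha
      obtain ⟨b, hb⟩ := Ideal.mem_span_singleton.mp (key a ha)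
      have hφb : φ b = 0 := by
        apply htf
        have : φ a = (p : A) * φ b := by
          rw [hb, map_mul, map_natCast]
        rw [← this, ha]
      obtain ⟨c, hc⟩ := Ideal.mem_span_singleton.mp (ih b hφb)
      rw [Ideal.mem_span_singleton, hb, hc]
      exact ⟨c, by ring⟩
  rw [injective_iff_map_eq_zero]
  intro a ha
  exact hsep a (fun n => main n a ha)
end

section
/- Let A be a commutative ring and t ∈ A a non-zero-divisor, and let S ⊆ A be a multiplicative set consisting of non-zero-divisors. If A is p-root closed in A[1/t] (i.e., any x ∈ A[1/t] with x^p ∈ A lies in A), then S⁻¹A is p-root closed in (S⁻¹A)[1/t]. -/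
/-- Let `A` be a commutative ring, `t ∈ A` a non-zero-divisor and
`S ⊆ A` a multiplicative set of non-zero-divisors.  If `A` is `p`-root closed in
`A[1/t]` then `S⁻¹A` is `p`-root closed in `(S⁻¹A)[1/t]`.

Since `t` and the elements of `S` are non-zero-divisors, all the rings embed in a common
localization and the root-closedness conditions are expressed elementwise: an element
`a / t^n` of `A[1/t]` lies in `A` iff `a = t ^ n * c` for some `c`, etc. -/
theorem pRootClosed_localization
    (A : Type*) [CommRing A] (p : ℕ) (hp : p.Prime)
    (t : A) (ht : t ∈ nonZeroDivisors A)
    (S : Submonoid A) (hS : (S : Set A) ⊆ nonZeroDivisors A)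
    -- `A` is `p`-root closed in `A[1/t]`:
    (hrc : ∀ (a : A) (n : ℕ), (∃ b : A, a ^ p = t ^ (n * p) * b) → ∃ c : A, a = t ^ n * c) :
    -- `S⁻¹A` is `p`-root closed in `(S⁻¹A)[1/t]`:
    ∀ (a : A) (s : S) (n : ℕ),
      (∃ (b : A) (s' : S), (s' : A) * a ^ p = (s : A) ^ p * t ^ (n * p) * b) →
      ∃ (c : A) (s'' : S), (s'' : A) * a = (s : A) * t ^ n * c := by
  rintro a s n ⟨b, s', h⟩
  obtain ⟨q, rfl⟩ : ∃ q, p = q + 1 := ⟨p - 1, (Nat.succ_pred_eq_of_pos hp.pos).symm⟩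
  have key : ((s' : A) * a) ^ (q + 1) = t ^ (n * (q + 1)) * ((s' : A) ^ q * (s : A) ^ (q + 1) * b) := by
    calc ((s' : A) * a) ^ (q + 1) = (s' : A) ^ q * ((s' : A) * a ^ (q + 1)) := by ring
      _ = t ^ (n * (q + 1)) * ((s' : A) ^ q * (s : A) ^ (q + 1) * b) := by rw [h]; ring
  obtain ⟨c, hc⟩ := hrc ((s' : A) * a) n ⟨_, key⟩
  exact ⟨c, s * s', by push_cast; rw [mul_assoc, hc]; ring⟩
end

section
/- Let A be a commutative ring, p a prime, d ∈ A a non-zero-divisor on A/pA. The p-th power map (A/pA)/(d̄) → (A/pA)/(d̄^p), sending a mod (p,d) to a^p mod (p, d^p), is injective if and only if A/pA is p-root closed in (A/pA)[1/d̄]. -/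
/-!
Modulo `p` both conditions are statements about divisibility in `R = A/pA`, where `d̄` is
cancellable: injectivity says `d̄ ^ p ∣ x ^ p → d̄ ∣ x`, root closedness says
`d̄ ^ (n * p) ∣ x ^ p → d̄ ^ n ∣ x` for all `n`. The first is the case `n = 1` of the second;
conversely, if `d̄ ^ ((n + 1) * p) ∣ x ^ p` then `x = d̄ * y` by the first, cancelling `d̄ ^ p`
gives `d̄ ^ (n * p) ∣ y ^ p`, and induction on `n` finishes.
-/

theorem IsLeftRegular.pow_dvd_of_pow_mul_dvd_pow {M : Type*} [CommMonoid M] {d : M}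
    (hd : IsLeftRegular d) {p : ℕ} (h : ∀ x : M, d ^ p ∣ x ^ p → d ∣ x) :
    ∀ (n : ℕ) (x : M), d ^ (n * p) ∣ x ^ p → d ^ n ∣ x
  | 0, _, _ => by simp
  | n + 1, x, hx => by
    have hdx : d ^ ((n + 1) * p) = d ^ p * d ^ (n * p) := by rw [add_one_mul, pow_add, mul_comm]
    obtain ⟨y, rfl⟩ := h x (dvd_of_mul_right_dvd (hdx ▸ hx))
    rw [hdx, mul_pow, (hd.pow p).dvd_cancel_left] at hx
    simpa [pow_succ'] using mul_dvd_mul_left d (hd.pow_dvd_of_pow_mul_dvd_pow h n y hx)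

theorem IsLeftRegular.forall_dvd_of_pow_dvd_pow_iff {M : Type*} [CommMonoid M] {d : M}
    (hd : IsLeftRegular d) (p : ℕ) :
    (∀ x : M, d ^ p ∣ x ^ p → d ∣ x) ↔ ∀ (n : ℕ) (x : M), d ^ (n * p) ∣ x ^ p → d ^ n ∣ x :=
  ⟨hd.pow_dvd_of_pow_mul_dvd_pow, fun h x hx => by simpa using h 1 x (by simpa using hx)⟩

namespace Ideal

variable {A : Type*} [CommRing A]

theorem mem_span_pair_iff_exists_sub_mul_mem {x y a : A} :
    a ∈ span ({x, y} : Set A) ↔ ∃ b, a - y * b ∈ span {x} := by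
  simp only [mem_span_pair, mem_span_singleton']
  constructor
  · rintro ⟨c, b, rfl⟩
    exact ⟨b, c, by ring⟩
  · rintro ⟨b, c, hc⟩
    exact ⟨c, b, by rw [hc]; ring⟩

theorem Quotient.mk_dvd_mk_iff {I : Ideal A} {y a : A} :
    mk I y ∣ mk I a ↔ ∃ b, a - y * b ∈ I := by
  simp only [Dvd.dvd, mk_surjective.exists, ← map_mul, eq_comm (a := mk I a), Quotient.eq]
  exact exists_congr fun _ => sub_mem_comm_iff

theorem Quotient.isLeftRegular_mk {I : Ideal A} {d : A} (hd : ∀ a, d * a ∈ I → a ∈ I) :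
    IsLeftRegular (mk I d) := by
  intro x y hxy
  obtain ⟨a, rfl⟩ := mk_surjective x
  obtain ⟨b, rfl⟩ := mk_surjective y
  simp only [← map_mul, Quotient.eq] at hxy ⊢
  exact hd _ (by rwa [mul_sub])

end Ideal

theorem pPower_injective_iff_pRootClosed_general
    (A : Type*) [CommRing A] (p : ℕ) (d : A)
    -- `d̄` is a non-zero-divisor on `A/pA`:
    (hdreg : ∀ a : A, d * a ∈ Ideal.span {(p : A)} → a ∈ Ideal.span {(p : A)}) :
    -- injectivity of the `p`-th power map `(A/pA)/(d̄) → (A/pA)/(d̄^p)` …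
    (∀ a : A, a ^ p ∈ Ideal.span ({(p : A), d ^ p} : Set A) →
        a ∈ Ideal.span ({(p : A), d} : Set A)) ↔
    -- … iff `A/pA` is `p`-root closed in `(A/pA)[1/d̄]`:
    (∀ (a : A) (n : ℕ),
      (∃ b : A, a ^ p - d ^ (n * p) * b ∈ Ideal.span {(p : A)}) →
      ∃ c : A, a - d ^ n * c ∈ Ideal.span {(p : A)}) := by
  have key := (Ideal.Quotient.isLeftRegular_mk hdreg).forall_dvd_of_pow_dvd_pow_iff p
  simp only [Ideal.Quotient.mk_surjective.forall, ← map_pow, Ideal.Quotient.mk_dvd_mk_iff] at key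
  simp only [Ideal.mem_span_pair_iff_exists_sub_mul_mem]
  exact key.trans forall_comm

/-- Let `A` be a commutative ring, `p` a prime and `d ∈ A` a
non-zero-divisor on `A/pA`.  The `p`-th power map
`(A/pA)/(d̄) → (A/pA)/(d̄^p)`, `a ↦ a^p`, is injective if and only if `A/pA` is
`p`-root closed in `(A/pA)[1/d̄]`. -/
theorem pPower_injective_iff_pRootClosed
    (A : Type*) [CommRing A] (p : ℕ) (hp : p.Prime) (d : A)
    -- `d̄` is a non-zero-divisor on `A/pA`:
    (hdreg : ∀ a : A, d * a ∈ Ideal.span {(p : A)} → a ∈ Ideal.span {(p : A)}) :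
    -- injectivity of the `p`-th power map `(A/pA)/(d̄) → (A/pA)/(d̄^p)` …
    (∀ a : A, a ^ p ∈ Ideal.span ({(p : A), d ^ p} : Set A) →
        a ∈ Ideal.span ({(p : A), d} : Set A)) ↔
    -- … iff `A/pA` is `p`-root closed in `(A/pA)[1/d̄]`:
    (∀ (a : A) (n : ℕ),
      (∃ b : A, a ^ p - d ^ (n * p) * b ∈ Ideal.span {(p : A)}) →
      ∃ c : A, a - d ^ n * c ∈ Ideal.span {(p : A)}) :=
  pPower_injective_iff_pRootClosed_general A p d hdreg
end

section
/- Let A be a p-torsion-free commutative ring with Frobenius lift φ and d ∈ A a distinguished element (δ(d) := (φ(d)-d^p)/p is a unit). Then there exists a unit u of A/φ(d)A such that (d mod φ(d)A)^p = u · (φ applied to φ(d), taken mod φ(d)A); explicitly, d^p ≡ -δ(d)·φ(δ(d))^{-1} · φ(φ(d)) mod φ(d)A. -/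
/-- Let `A` be a `p`-torsion-free commutative ring with Frobenius lift
`φ` and `d ∈ A` a distinguished element, i.e. `δ(d) = (φ(d) - d^p)/p` is a unit `u` of
`A` (then `φ(δ(d))` is a unit `v` as well).  Then there is a unit `w` of `A/φ(d)A` with
`d̄^p = w * φ(φ(d))‾`; explicitly `d^p ≡ -δ(d) · φ(δ(d))⁻¹ · φ(φ(d)) mod φ(d)A`. -/
theorem dPow_eq_unit_mul_phi_phi_d
    (A : Type*) [CommRing A] (p : ℕ) (hp : p.Prime) (φ : A →+* A)
    (hlift : ∀ a : A, φ a - a ^ p ∈ Ideal.span {(p : A)})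
    (htf : ∀ a : A, (p : A) * a = 0 → a = 0)
    (d δd : A) (hd : φ d = d ^ p + (p : A) * δd)
    (u : Aˣ) (hu : (u : A) = δd) (v : Aˣ) (hv : (v : A) = φ δd) :
    (∃ w : (A ⧸ Ideal.span {φ d})ˣ,
        (Ideal.Quotient.mk (Ideal.span {φ d}) d) ^ p =
          (w : A ⧸ Ideal.span {φ d}) *
            Ideal.Quotient.mk (Ideal.span {φ d}) (φ (φ d))) ∧
      d ^ p - (-δd * ((v⁻¹ : Aˣ) : A) * φ (φ d)) ∈ Ideal.span {φ d} := by
  have hvv : (v : A) * ((v⁻¹ : Aˣ) : A) = 1 := by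
    rw [← Units.val_mul, mul_inv_cancel, Units.val_one]
  have hφφ : φ (φ d) = (φ d) ^ p + (p : A) * φ δd := by
    conv_lhs => rw [hd, map_add, map_mul, map_pow, map_natCast]
  have hmem : d ^ p - (-δd * ((v⁻¹ : Aˣ) : A) * φ (φ d)) ∈ Ideal.span {φ d} := by
    have key : d ^ p - (-δd * ((v⁻¹ : Aˣ) : A) * φ (φ d)) =
        (1 + δd * ((v⁻¹ : Aˣ) : A) * (φ d) ^ (p - 1)) * φ d := by
      have hp1 : (φ d) ^ p = (φ d) ^ (p - 1) * φ d := by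
        conv_lhs => rw [← Nat.sub_add_cancel hp.one_lt.le, pow_succ]
      have hd' : d ^ p = φ d - (p : A) * δd := by rw [hd]; ring
      rw [hφφ, hd', hp1]
      linear_combination ((p:A) * δd) * hvv - ((p:A) * δd * ((v⁻¹ : Aˣ) : A)) * hv
    rw [key]
    exact Ideal.mem_span_singleton.mpr ⟨_, mul_comm _ _⟩
  refine ⟨⟨Units.map (Ideal.Quotient.mk (Ideal.span {φ d})).toMonoidHom
      (-u * v⁻¹), ?_⟩, hmem⟩
  have h0 : (Ideal.Quotient.mk (Ideal.span {φ d})) (d ^ p) =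
      (Ideal.Quotient.mk (Ideal.span {φ d})) (-δd * ((v⁻¹ : Aˣ) : A) * φ (φ d)) :=
    Ideal.Quotient.eq.mpr hmem
  have hw : ((-u * v⁻¹ : Aˣ) : A) = -δd * ((v⁻¹ : Aˣ) : A) := by
    rw [Units.val_mul, Units.val_neg, hu]
  simp only [Units.coe_map, RingHom.toMonoidHom_eq_coe, MonoidHom.coe_coe, hw]
  rw [← map_pow, h0, map_mul]
end

section
/- Let p be a prime and consider the ideal J = (X², X(pY + 1)) in ℤ_p[X, Y]. Then J is δ-stable for the δ-structure with δ(X) = δ(Y) = 0; moreover ℤ_p[X,Y]/J is p-torsion-free, and 𝔽_p[X,Y]/(X², X(pY+1)) ≅ 𝔽_p[Y] (in particular the mod p reduction is a regular ring), while ℤ_p[X,Y]/J is not reduced. -/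
open MvPolynomial

/-! Writing `ℤ_p[X,Y] = ℤ_p[Y][X]` and `c = pY + 1`, a polynomial lies in `J = (X², X·c)` iff its
constant term in `X` vanishes and its `X`-coefficient is divisible by `c`. As `c - Y·p = 1`, `c`
and `p` are coprime, so `p f ∈ J` forces `f ∈ J`; as `c` is not a unit, `X ∉ J` while `X² ∈ J`.
The substitution `X ↦ X^p, Y ↦ Y^p` sends both generators into `(X²)`, and it agrees with `f ↦ f^p`
modulo `p`; so `φ(f) - f^p = p g` lies in `J`, whence `g ∈ J`. Modulo `p` the second generator
becomes `X`, and the reduction is `𝔽_p[X,Y]/(X) ≅ 𝔽_p[Y]`. -/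

theorem Polynomial.mem_span_X_sq_X_mul_C_iff {R : Type*} [CommRing R] (c : R) (f : Polynomial R) :
    f ∈ Ideal.span {Polynomial.X ^ 2, Polynomial.X * Polynomial.C c} ↔
      f.coeff 0 = 0 ∧ c ∣ f.coeff 1 := by
  rw [Ideal.mem_span_pair]
  constructor
  · rintro ⟨u, v, rfl⟩
    refine ⟨by simp, v.coeff 0, ?_⟩
    rw [Polynomial.coeff_add, Polynomial.coeff_mul_X_pow', ← mul_assoc, Polynomial.coeff_mul_C,
      Polynomial.coeff_mul_X]
    simp [mul_comm]
  · rintro ⟨h0, w, hw⟩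
    obtain ⟨g, hg⟩ : Polynomial.X ^ 2 ∣ f - Polynomial.C (c * w) * Polynomial.X := by
      rw [Polynomial.X_pow_dvd_iff]
      intro d hd
      interval_cases d <;> simp [h0, hw]
    exact ⟨g, Polynomial.C w, by rw [Polynomial.C_mul] at hg; linear_combination -hg⟩

namespace MvPolynomial

variable (R : Type*) [CommRing R]

noncomputable def finTwoAlgEquiv : MvPolynomial (Fin 2) R ≃ₐ[R] Polynomial (Polynomial R) :=
  (finSuccEquiv R 1).trans <| Polynomial.mapAlgEquiv <|
    (finSuccEquiv R 0).trans <| Polynomial.mapAlgEquiv <| isEmptyAlgEquiv R (Fin 0)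

@[simp]
theorem finTwoAlgEquiv_X_zero : finTwoAlgEquiv R (X 0) = Polynomial.X := by
  simp [finTwoAlgEquiv, finSuccEquiv_X_zero]

@[simp]
theorem finTwoAlgEquiv_X_one : finTwoAlgEquiv R (X 1) = Polynomial.C Polynomial.X := by
  rw [show (X 1 : MvPolynomial (Fin 2) R) = X (Fin.succ 0) from rfl, finTwoAlgEquiv,
    AlgEquiv.trans_apply, finSuccEquiv_X_succ]
  simp [finSuccEquiv_X_zero]

noncomputable def quotientSpanXZeroEquiv :
    MvPolynomial (Fin 2) R ⧸ Ideal.span {(X 0 : MvPolynomial (Fin 2) R)} ≃+* Polynomial R :=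
  (Ideal.quotientEquiv _ (Ideal.span {Polynomial.X - Polynomial.C 0})
      (finTwoAlgEquiv R).toRingEquiv (by simp [Ideal.map_span])).trans
    (Polynomial.quotientSpanXSubCAlgEquiv 0).toRingEquiv

end MvPolynomial

theorem PadicInt.exists_expand_eq_pow_add_natCast_mul {p : ℕ} [Fact p.Prime] {σ : Type*}
    (f : MvPolynomial σ ℤ_[p]) : ∃ g, expand p f = f ^ p + p * g := by
  have hdvd : C (p : ℤ_[p]) ∣ expand p f - f ^ p := by
    rw [C_dvd_iff_map_hom_eq_zero PadicInt.toZMod _ ?_, map_sub, map_expand, map_pow, expand_zmod,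
      sub_self]
    intro x
    rw [← RingHom.mem_ker, PadicInt.ker_toZMod, PadicInt.maximalIdeal_eq_span_p,
      Ideal.mem_span_singleton]
  obtain ⟨g, hg⟩ := hdvd
  exact ⟨g, by rw [← map_natCast C, ← hg]; ring⟩

theorem exists_mem_expand_eq_pow_add_natCast_mul {p : ℕ} [Fact p.Prime] {σ : Type*}
    {I : Ideal (MvPolynomial σ ℤ_[p])} (hexpand : ∀ f ∈ I, expand p f ∈ I)
    (htorsion : ∀ g, (p : MvPolynomial σ ℤ_[p]) * g ∈ I → g ∈ I) {f : MvPolynomial σ ℤ_[p]}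
    (hf : f ∈ I) : ∃ g ∈ I, expand p f = f ^ p + p * g := by
  obtain ⟨g, hg⟩ := PadicInt.exists_expand_eq_pow_add_natCast_mul f
  refine ⟨g, htorsion g ?_, hg⟩
  rw [eq_sub_of_add_eq' hg.symm]
  exact I.sub_mem (hexpand f hf) (I.pow_mem_of_mem hf p (Fact.out : p.Prime).pos)

section

variable (R : Type*) [CommRing R] (p : ℕ)

noncomputable def pathologicalIdeal : Ideal (MvPolynomial (Fin 2) R) :=
  Ideal.span {X 0 ^ 2, X 0 * ((p : MvPolynomial (Fin 2) R) * X 1 + 1)}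

variable {R p}

theorem mem_pathologicalIdeal_iff {f : MvPolynomial (Fin 2) R} :
    f ∈ pathologicalIdeal R p ↔ (finTwoAlgEquiv R f).coeff 0 = 0 ∧
      ((p : Polynomial R) * Polynomial.X + 1) ∣ (finTwoAlgEquiv R f).coeff 1 := by
  have hc : finTwoAlgEquiv R ((p : MvPolynomial (Fin 2) R) * X 1 + 1) =
      Polynomial.C ((p : Polynomial R) * Polynomial.X + 1) := by simp
  rw [← Ideal.apply_mem_of_equiv_iff (f := (finTwoAlgEquiv R).toRingEquiv), pathologicalIdeal,
    Ideal.map_span, Set.image_pair, ← Polynomial.mem_span_X_sq_X_mul_C_iff]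
  simp only [AlgEquiv.coe_ringEquiv, map_pow, map_mul, finTwoAlgEquiv_X_zero, hc]

theorem expand_mem_pathologicalIdeal {q : ℕ} (hq : 2 ≤ q) {f : MvPolynomial (Fin 2) R}
    (hf : f ∈ pathologicalIdeal R p) : expand q f ∈ pathologicalIdeal R p := by
  have hX : (X 0 : MvPolynomial (Fin 2) R) ^ 2 ∈ pathologicalIdeal R p :=
    Ideal.subset_span (Set.mem_insert _ _)
  suffices pathologicalIdeal R p ≤ (pathologicalIdeal R p).comap (expand q) from this hf
  refine Ideal.span_le.2 ?_
  rintro g (rfl | rfl) <;> refine Ideal.mem_comap.2 (Ideal.mem_of_dvd _ ?_ hX)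
  · rw [map_pow, expand_X]
    exact pow_dvd_pow_of_dvd (dvd_pow_self _ (by omega)) 2
  · rw [map_mul, expand_X]
    exact (pow_dvd_pow _ hq).mul_right _

theorem pathologicalIdeal_eq_span_X_zero (hp : (p : R) = 0) :
    pathologicalIdeal R p = Ideal.span {X 0} := by
  have : (p : MvPolynomial (Fin 2) R) = 0 := by rw [← map_natCast C, hp, map_zero]
  rw [pathologicalIdeal, this, zero_mul, zero_add, mul_one, Ideal.span_insert,
    sup_eq_right.2 (Ideal.span_singleton_le_span_singleton.2 (dvd_pow_self _ two_ne_zero))]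

theorem X_zero_notMem_pathologicalIdeal [IsReduced R] (hp : (p : R) ≠ 0) :
    (X 0 : MvPolynomial (Fin 2) R) ∉ pathologicalIdeal R p := by
  rw [mem_pathologicalIdeal_iff, finTwoAlgEquiv_X_zero, Polynomial.coeff_X_one,
    Polynomial.coeff_X_zero, ← isUnit_iff_dvd_one]
  rintro ⟨-, hunit⟩
  have := (Polynomial.coeff_isUnit_isNilpotent_of_isUnit hunit).2 1 one_ne_zero
  exact hp (by simpa [Polynomial.coeff_one] using this)

theorem not_isReduced_quotient_pathologicalIdeal [IsReduced R] (hp : (p : R) ≠ 0) :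
    ¬ IsReduced (MvPolynomial (Fin 2) R ⧸ pathologicalIdeal R p) := by
  intro _
  refine X_zero_notMem_pathologicalIdeal hp (Ideal.Quotient.eq_zero_iff_mem.1 ?_)
  refine IsNilpotent.eq_zero ⟨2, ?_⟩
  rw [← map_pow, Ideal.Quotient.eq_zero_iff_mem]
  exact Ideal.subset_span (Set.mem_insert _ _)

theorem mem_pathologicalIdeal_of_natCast_mul_mem [IsDomain R] (hp : (p : R) ≠ 0)
    {f : MvPolynomial (Fin 2) R} (h : (p : MvPolynomial (Fin 2) R) * f ∈ pathologicalIdeal R p) :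
    f ∈ pathologicalIdeal R p := by
  have hp' : (p : Polynomial R) ≠ 0 := by rwa [← Polynomial.C_eq_natCast, Polynomial.C_ne_zero]
  have hcop : IsCoprime ((p : Polynomial R) * Polynomial.X + 1) (p : Polynomial R) :=
    ⟨1, -Polynomial.X, by ring⟩
  rw [mem_pathologicalIdeal_iff] at h ⊢
  rw [map_mul, map_natCast] at h
  simp only [Polynomial.coeff_natCast_mul, mul_eq_zero, hp', false_or] at h
  exact ⟨h.1, hcop.dvd_of_dvd_mul_left h.2⟩

end

/-- Let `p` be a prime and `J = (X², X(pY+1)) ⊆ ℤ_p[X,Y]`, where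
`ℤ_p[X,Y]` carries the δ-structure with `δ(X) = δ(Y) = 0`, i.e. the Frobenius lift
`φ : f(X,Y) ↦ f(X^p, Y^p)`.  Then `J` is δ-stable (for every `f ∈ J` one has
`φ(f) = f^p + p·g` with `g ∈ J`), the quotient `ℤ_p[X,Y]/J` is `p`-torsion-free,
the mod-`p` reduction satisfies `𝔽_p[X,Y]/(X², X(pY+1)) ≅ 𝔽_p[Y]` (a regular ring),
but `ℤ_p[X,Y]/J` is not reduced. -/
theorem deltaStable_pathological_example
    (p : ℕ) [Fact p.Prime]
    (J : Ideal (MvPolynomial (Fin 2) ℤ_[p]))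
    (hJ : J = Ideal.span
      ({X 0 ^ 2, X 0 * ((p : MvPolynomial (Fin 2) ℤ_[p]) * X 1 + 1)} :
        Set (MvPolynomial (Fin 2) ℤ_[p]))) :
    (∀ f ∈ J, ∃ g ∈ J,
        (aeval (fun i : Fin 2 => (X i : MvPolynomial (Fin 2) ℤ_[p]) ^ p)) f
          = f ^ p + (p : MvPolynomial (Fin 2) ℤ_[p]) * g) ∧
      (∀ x : MvPolynomial (Fin 2) ℤ_[p] ⧸ J,
        (p : MvPolynomial (Fin 2) ℤ_[p] ⧸ J) * x = 0 → x = 0) ∧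
      Nonempty ((MvPolynomial (Fin 2) (ZMod p) ⧸
          Ideal.span ({X 0 ^ 2, X 0 * ((p : MvPolynomial (Fin 2) (ZMod p)) * X 1 + 1)} :
            Set (MvPolynomial (Fin 2) (ZMod p)))) ≃+* Polynomial (ZMod p)) ∧
      ¬ IsReduced (MvPolynomial (Fin 2) ℤ_[p] ⧸ J) := by
  have hprime : p.Prime := Fact.out
  have hp : (p : ℤ_[p]) ≠ 0 := Nat.cast_ne_zero.2 hprime.ne_zero
  change J = pathologicalIdeal ℤ_[p] p at hJ
  subst hJ
  refine ⟨fun f hf => ?_, fun x hx => ?_,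
    ⟨(Ideal.quotEquivOfEq (pathologicalIdeal_eq_span_X_zero (ZMod.natCast_self p))).trans
      (quotientSpanXZeroEquiv _)⟩, not_isReduced_quotient_pathologicalIdeal hp⟩
  · exact exists_mem_expand_eq_pow_add_natCast_mul
      (fun _ => expand_mem_pathologicalIdeal hprime.two_le)
      (fun _ => mem_pathologicalIdeal_of_natCast_mul_mem hp) hf
  · obtain ⟨f, rfl⟩ := Ideal.Quotient.mk_surjective x
    rw [← map_natCast (Ideal.Quotient.mk _), ← map_mul, Ideal.Quotient.eq_zero_iff_mem] at hx
    exact Ideal.Quotient.eq_zero_iff_mem.2 (mem_pathologicalIdeal_of_natCast_mul_mem hp hx)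
end

section
/- Let p = 2 and suppose n₂ = 2n₂′ and n₃ = 2n₃′ are both even. Then in the ring 𝔽₂[X,Y,Z]/(X^{n₁}+Y^{n₂}+Z^{n₃}, Y^{2n₂}+Y^{n₂}Z^{n₃}+Z^{2n₃}), the element Y^{n₂} + Y^{n₂′}Z^{n₃′} + Z^{n₃} is a nonzero nilpotent (its square is zero); in particular the ring is not reduced. -/
/-!
Write `a = Y^{n₂′}` and `b = Z^{n₃′}`. In characteristic 2 the square of `a² + ab + b²` is the
second generator `a⁴ + a²b² + b⁴`, so the element squares to zero. It is nonzero because the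
substitution `X ↦ 0`, `Y ↦ T^{n₃′}`, `Z ↦ T^{n₂′}` into `𝔽₂[T]` sends `a` and `b` to the same
`s = T^{n₂′n₃′}`, hence the ideal onto `(s⁴)` and the element to `s² ∉ (s⁴)`.
-/

open MvPolynomial

theorem CharTwo.sq_add_mul_add_sq_sq {R : Type*} [CommRing R] [CharP R 2] (a b : R) :
    (a ^ 2 + a * b + b ^ 2) ^ 2 = (a ^ 2) ^ 2 + a ^ 2 * b ^ 2 + (b ^ 2) ^ 2 := by
  linear_combination (a ^ 3 * b + a ^ 2 * b ^ 2 + a * b ^ 3) * CharTwo.two_eq_zero (R := R)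

theorem Polynomial.X_pow_notMem_span_X_pow {K : Type*} [CommRing K] [IsDomain K] {k n : ℕ}
    (h : k < n) :
    (X ^ k : Polynomial K) ∉ Ideal.span {X ^ n} := by
  rw [Ideal.mem_span_singleton, pow_dvd_pow_iff X_ne_zero not_isUnit_X]
  omega

section CharTwoQuotient

variable {A : Type*} [CommRing A]

theorem CharTwo.mk_sq_add_mul_add_sq_sq_eq_zero [CharP A 2] (a b c : A) :
    Ideal.Quotient.mk (Ideal.span {c + a ^ 2 + b ^ 2, (a ^ 2) ^ 2 + a ^ 2 * b ^ 2 + (b ^ 2) ^ 2})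
      (a ^ 2 + a * b + b ^ 2) ^ 2 = 0 := by
  rw [← map_pow, CharTwo.sq_add_mul_add_sq_sq, Ideal.Quotient.eq_zero_iff_mem]
  exact Ideal.subset_span (Set.mem_insert_of_mem _ rfl)

theorem CharTwo.mk_sq_add_mul_add_sq_ne_zero {B : Type*} [CommRing B] [CharP B 2]
    (ψ : A →+* B) {a b c : A} (hc : ψ c = 0) (hab : ψ a = ψ b)
    (hs : ψ a ^ 2 ∉ Ideal.span {ψ a ^ 4}) :
    Ideal.Quotient.mk (Ideal.span {c + a ^ 2 + b ^ 2, (a ^ 2) ^ 2 + a ^ 2 * b ^ 2 + (b ^ 2) ^ 2})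
      (a ^ 2 + a * b + b ^ 2) ≠ 0 := by
  have two : (2 : B) = 0 := CharTwo.two_eq_zero
  have hmap : (Ideal.span {c + a ^ 2 + b ^ 2, (a ^ 2) ^ 2 + a ^ 2 * b ^ 2 + (b ^ 2) ^ 2}).map ψ
      = Ideal.span {ψ a ^ 4} := by
    have h₁ : ψ (c + a ^ 2 + b ^ 2) = 0 := by
      simp only [map_add, map_pow, hc, ← hab]
      linear_combination ψ a ^ 2 * two
    have h₂ : ψ ((a ^ 2) ^ 2 + a ^ 2 * b ^ 2 + (b ^ 2) ^ 2) = ψ a ^ 4 := by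
      simp only [map_add, map_mul, map_pow, ← hab]
      linear_combination ψ a ^ 4 * two
    rw [Ideal.map_span, Set.image_pair, h₁, h₂, Ideal.span_insert_zero]
  have hf : ψ (a ^ 2 + a * b + b ^ 2) = ψ a ^ 2 := by
    simp only [map_add, map_mul, map_pow, ← hab]
    linear_combination ψ a ^ 2 * two
  rw [Ne, Ideal.Quotient.eq_zero_iff_mem]
  intro hmem
  exact hs (hf ▸ hmap ▸ Ideal.mem_map_of_mem ψ hmem)

end CharTwoQuotient

/-- Let `p = 2` and `n₂ = 2n₂′`, `n₃ = 2n₃′` both even.  In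
`𝔽₂[X,Y,Z]/(X^{n₁} + Y^{n₂} + Z^{n₃}, Y^{2n₂} + Y^{n₂}Z^{n₃} + Z^{2n₃})` the element
`Y^{n₂} + Y^{n₂′}Z^{n₃′} + Z^{n₃}` is a nonzero nilpotent (its square is zero);
in particular the ring is not reduced. -/
theorem nonreduced_of_even_exponents
    (n₁ n₂' n₃' : ℕ) (h₁ : 1 ≤ n₁) (h₂ : 1 ≤ n₂') (h₃ : 1 ≤ n₃')
    (I : Ideal (MvPolynomial (Fin 3) (ZMod 2)))
    (hI : I = Ideal.span
      ({X 0 ^ n₁ + X 1 ^ (2 * n₂') + X 2 ^ (2 * n₃'),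
        X 1 ^ (2 * (2 * n₂')) + X 1 ^ (2 * n₂') * X 2 ^ (2 * n₃') + X 2 ^ (2 * (2 * n₃'))} :
        Set (MvPolynomial (Fin 3) (ZMod 2)))) :
    Ideal.Quotient.mk I (X 1 ^ (2 * n₂') + X 1 ^ n₂' * X 2 ^ n₃' + X 2 ^ (2 * n₃')) ≠ 0 ∧
      (Ideal.Quotient.mk I (X 1 ^ (2 * n₂') + X 1 ^ n₂' * X 2 ^ n₃' + X 2 ^ (2 * n₃'))) ^ 2
        = 0 ∧
      ¬ IsReduced (MvPolynomial (Fin 3) (ZMod 2) ⧸ I) := by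
  replace hI : I = Ideal.span {X 0 ^ n₁ + (X 1 ^ n₂') ^ 2 + (X 2 ^ n₃') ^ 2,
      ((X 1 ^ n₂') ^ 2) ^ 2 + (X 1 ^ n₂') ^ 2 * (X 2 ^ n₃') ^ 2 + ((X 2 ^ n₃') ^ 2) ^ 2} := by
    simpa only [pow_mul'] using hI
  subst hI
  simp only [pow_mul']
  set ψ := aeval (R := ZMod 2) ![0, (Polynomial.X : Polynomial (ZMod 2)) ^ n₃', Polynomial.X ^ n₂']
  have hψa : ψ (X 1 ^ n₂') = Polynomial.X ^ (n₂' * n₃') := by simp [ψ, ← pow_mul, mul_comm]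
  have hψb : ψ (X 2 ^ n₃') = Polynomial.X ^ (n₂' * n₃') := by simp [ψ, ← pow_mul]
  have hne := CharTwo.mk_sq_add_mul_add_sq_ne_zero ψ.toRingHom
    (show ψ (X 0 ^ n₁) = 0 by simp [ψ]; omega) (hψa.trans hψb.symm) (by
      simp only [AlgHom.toRingHom_eq_coe, RingHom.coe_coe, hψa, ← pow_mul]
      exact Polynomial.X_pow_notMem_span_X_pow (by nlinarith))
  have hsq := CharTwo.mk_sq_add_mul_add_sq_sq_eq_zero
    (X 1 ^ n₂' : MvPolynomial (Fin 3) (ZMod 2)) (X 2 ^ n₃') (X 0 ^ n₁)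
  exact ⟨hne, hsq, fun _ => hne (IsReduced.eq_zero _ ⟨2, hsq⟩)⟩
end
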